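/- Let q ∈ [10⁻¹⁵, 0.1] and set y = -log₂(-ln(1-q)). If k_opt is a positive integer minimizing k ↦ q·k / (1 - (1-q)^{2^k - 1}) over the positive integers, then k_opt ∈ {⌊y⌋, ⌊y⌋+1, ⌊y⌋+2, ⌊y⌋+3, ⌈y⌉+3}; in particular, the iterative search that starts at k = ⌊y⌋ and increases k until the objective stops decreasing terminates within five iterations. -/

import Mathlib

/-!
Put `t = 1 - q` and `a = -log t`, so that `t ^ n = exp (-n a)` and `a = 2 ^ (-y)`.
Writing `s = t ^ (2^k - 1)` and `w = t ^ (2^k)`, the codelength decreases from `k` to `k + 1`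
exactly when `1 - s < k s (1 - w)`. The elementary bounds `1 - x ≤ exp (-x) ≤ 1 / (1 + x)`
show that this holds as long as `a 2^(k+1) ≤ 1`, i.e. `k + 1 ≤ y`; hence `⌊y⌋ ≤ k_opt`.
Conversely, once `a 2^k ≥ 8` the factor `s = exp (-a (2^k - 1))` is below `1 / (k + 1)`
(for large `k` because `a ≥ q ≥ 10⁻¹⁵`), so the codelength increases from `k` to `k + 1`;
hence `k_opt ≤ ⌈y⌉ + 3`.
-/

open Real

/-- The paper's `L̄(k)`: expected codelength per source letter, code alphabet size `2 ^ k`. -/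
noncomputable def mzrlLength (q : ℝ) (k : ℕ) : ℝ := q * k / (1 - (1 - q) ^ (2 ^ k - 1))

lemma natCast_two_pow_sub_one (k : ℕ) : ((2 ^ k - 1 : ℕ) : ℝ) = 2 ^ k - 1 := by
  rw [Nat.cast_sub Nat.one_le_two_pow]; push_cast; ring

lemma pow_two_pow_succ_sub_one (t : ℝ) (k : ℕ) :
    t ^ (2 ^ (k + 1) - 1) = t ^ (2 ^ k - 1) * t ^ 2 ^ k := by
  rw [← pow_add, pow_succ]
  have := Nat.one_le_two_pow (n := k)
  congr 1
  omega

lemma one_sub_pow_two_pow_sub_one_pos {t : ℝ} (ht0 : 0 ≤ t) (ht1 : t < 1) {k : ℕ}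
    (hk : 1 ≤ k) : 0 < 1 - t ^ (2 ^ k - 1) := by
  have := Nat.one_lt_two_pow (n := k) (by omega)
  exact sub_pos.2 (pow_lt_one₀ ht0 ht1 (by omega))

section PowBounds

variable {t : ℝ} (n : ℕ)

lemma pow_eq_exp_neg_mul_neg_log (ht : 0 < t) : t ^ n = exp (-(n * -log t)) := by
  rw [mul_neg, neg_neg, exp_nat_mul, exp_log ht]

lemma one_sub_pow_lt_mul_neg_log (ht0 : 0 < t) (ht1 : t < 1) (hn : n ≠ 0) :
    1 - t ^ n < n * -log t := by
  have hx : n * -log t ≠ 0 :=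
    mul_ne_zero (Nat.cast_ne_zero.2 hn) (neg_ne_zero.2 (log_neg ht0 ht1).ne)
  rw [pow_eq_exp_neg_mul_neg_log n ht0]
  linarith [add_one_lt_exp (neg_ne_zero.2 hx)]

lemma one_sub_mul_neg_log_le_pow (ht : 0 < t) : 1 - n * -log t ≤ t ^ n := by
  rw [pow_eq_exp_neg_mul_neg_log n ht]
  linarith [add_one_le_exp (-(n * -log t))]

lemma pow_mul_one_add_mul_neg_log_le_one (ht : 0 < t) : t ^ n * (1 + n * -log t) ≤ 1 := by
  rw [pow_eq_exp_neg_mul_neg_log n ht, exp_neg, inv_mul_le_one₀ (exp_pos _)]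
  linarith [add_one_le_exp (n * -log t)]

end PowBounds

lemma three_mul_two_pow_le (k : ℕ) : 3 * 2 ^ k ≤ k * (2 ^ k + 1) + 3 := by
  rcases Nat.lt_or_ge k 3 with hk | hk
  · interval_cases k <;> norm_num
  · nlinarith [Nat.mul_le_mul_right (2 ^ k) hk]

lemma ten_pow_mul_le_two_pow {j : ℕ} (hj : 60 ≤ j) : 10 ^ 15 * (j + 2) ≤ 2 ^ j := by
  obtain ⟨m, rfl⟩ := Nat.exists_eq_add_of_le' hj
  have := Nat.lt_two_pow_self (n := m)
  rw [pow_add]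
  nlinarith

lemma natCast_add_one_lt_exp {j : ℕ} {u : ℝ} (hu : 15 / 2 ≤ u)
    (hj : 1e-15 * (2 ^ j - 1) ≤ u) : (j : ℝ) + 1 < exp u := by
  rcases Nat.lt_or_ge j 60 with hj60 | hj60
  · have hj' : (j : ℝ) + 1 ≤ 60 := by exact_mod_cast hj60
    have hcube : (15 / 2 : ℝ) ^ 3 ≤ u ^ 3 := pow_le_pow_left₀ (by norm_num) hu 3
    have hexp := pow_div_factorial_le_exp u (by linarith) 3
    norm_num [Nat.factorial] at hexp
    linarith
  · have h2j : ((10 ^ 15 * (j + 2) : ℕ) : ℝ) ≤ 2 ^ j := by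
      exact_mod_cast ten_pow_mul_le_two_pow hj60
    push_cast at h2j
    linarith [add_one_le_exp u]

lemma mzrlLength_succ_sub_mzrlLength {q : ℝ} (hq0 : 0 < q) (hq1 : q < 1) {k : ℕ}
    (hk : 1 ≤ k) :
    mzrlLength q (k + 1) - mzrlLength q k =
      q * ((1 - (1 - q) ^ (2 ^ k - 1)) - k * (1 - q) ^ (2 ^ k - 1) * (1 - (1 - q) ^ 2 ^ k)) /
        ((1 - (1 - q) ^ (2 ^ (k + 1) - 1)) * (1 - (1 - q) ^ (2 ^ k - 1))) := by
  have hd := one_sub_pow_two_pow_sub_one_pos (t := 1 - q) (by linarith) (by linarith) hk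
  have hd' := one_sub_pow_two_pow_sub_one_pos (t := 1 - q) (by linarith) (by linarith)
    (Nat.le_succ_of_le hk)
  rw [mzrlLength, mzrlLength, div_sub_div _ _ hd'.ne' hd.ne']
  congr 1
  rw [pow_two_pow_succ_sub_one]
  push_cast
  ring

lemma mzrlLength_succ_lt {q : ℝ} (hq0 : 0 < q) (hq1 : q < 1) {k : ℕ} (hk : 1 ≤ k)
    (h : -log (1 - q) * 2 ^ (k + 1) ≤ 1) : mzrlLength q (k + 1) < mzrlLength q k := by
  set t := 1 - q
  have ht0 : 0 < t := by linarith
  have ht1 : t < 1 := by linarith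
  have hN : (3 : ℝ) * 2 ^ k ≤ k * (2 ^ k + 1) + 3 := by exact_mod_cast three_mul_two_pow_le k
  have hN1 : (1 : ℝ) ≤ 2 ^ k := one_le_pow₀ one_le_two
  have hs0 : 0 < t ^ (2 ^ k - 1) := pow_pos ht0 _
  set a := -log t
  set N : ℝ := 2 ^ k
  set s := t ^ (2 ^ k - 1)
  set w := t ^ 2 ^ k
  have ha : 0 < a := neg_pos.2 (log_neg ht0 ht1)
  have hNa : N * a ≤ 1 / 2 := by rw [pow_succ] at h; linarith
  have hs_lt : 1 - s < (N - 1) * a := by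
    have := one_sub_pow_lt_mul_neg_log (2 ^ k - 1) ht0 ht1
      (by have := Nat.one_lt_two_pow (n := k) (by omega); omega)
    rwa [natCast_two_pow_sub_one] at this
  have hs_ge : 1 - (N - 1) * a ≤ s := by
    have := one_sub_mul_neg_log_le_pow (2 ^ k - 1) ht0
    rwa [natCast_two_pow_sub_one] at this
  have hw : w * (1 + N * a) ≤ 1 := by
    have := pow_mul_one_add_mul_neg_log_le_one (2 ^ k) ht0
    rwa [Nat.cast_pow, Nat.cast_ofNat] at this
  have key : (N - 1) * a * (1 + N * a) ≤ k * (1 - (N - 1) * a) * (N * a) := by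
    have : (N - 1) * (k + 1) * (N * a) ≤ (N - 1) * (k + 1) / 2 := by
      nlinarith [mul_nonneg (sub_nonneg.2 hN1) (by positivity : (0 : ℝ) ≤ k + 1)]
    nlinarith
  have hdecr : 1 - s < k * s * (1 - w) := by
    refine hs_lt.trans_le (le_of_mul_le_mul_right ?_ (by positivity : 0 < 1 + N * a))
    calc (N - 1) * a * (1 + N * a) ≤ k * (1 - (N - 1) * a) * (N * a) := key
      _ ≤ k * s * (N * a) := by gcongr
      _ ≤ k * s * ((1 - w) * (1 + N * a)) :=
        mul_le_mul_of_nonneg_left (by linarith) (by positivity)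
      _ = k * s * (1 - w) * (1 + N * a) := by ring
  rw [← sub_neg, mzrlLength_succ_sub_mzrlLength hq0 hq1 hk]
  exact div_neg_of_neg_of_pos (mul_neg_of_pos_of_neg hq0 (by linarith))
    (mul_pos (one_sub_pow_two_pow_sub_one_pos ht0.le ht1 (by omega))
      (one_sub_pow_two_pow_sub_one_pos ht0.le ht1 hk))

lemma mzrlLength_lt_succ {q : ℝ} (hq0 : 0 < q) (hq1 : q < 1) {k : ℕ} (hk : 1 ≤ k)
    (h : 8 ≤ -log (1 - q) * 2 ^ k) (ha_lo : 1e-15 ≤ -log (1 - q))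
    (ha_hi : -log (1 - q) ≤ 1 / 2) :
    mzrlLength q k < mzrlLength q (k + 1) := by
  rw [← sub_pos, mzrlLength_succ_sub_mzrlLength hq0 hq1 hk]
  set t := 1 - q
  have ht0 : 0 < t := by linarith
  have ht1 : t < 1 := by linarith
  have hs : ((k : ℝ) + 1) * t ^ (2 ^ k - 1) < 1 := by
    set u := (2 ^ k - 1 : ℝ) * -log t
    have hu : (k : ℝ) + 1 < exp u := natCast_add_one_lt_exp (by linarith) (by nlinarith)
    rw [pow_eq_exp_neg_mul_neg_log _ ht0, natCast_two_pow_sub_one, exp_neg,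
      ← div_eq_mul_inv, div_lt_one (exp_pos u)]
    exact hu
  have hsw : 0 ≤ k * t ^ (2 ^ k - 1) * t ^ 2 ^ k := by positivity
  exact div_pos (mul_pos hq0 (by linarith))
    (mul_pos (one_sub_pow_two_pow_sub_one_pos ht0.le ht1 (by omega))
      (one_sub_pow_two_pow_sub_one_pos ht0.le ht1 hk))

lemma le_neg_log_one_sub {q : ℝ} (hq : q < 1) : q ≤ -log (1 - q) := by
  linarith [log_le_sub_one_of_pos (by linarith : 0 < 1 - q)]

lemma neg_log_one_sub_le_half {q : ℝ} (hq : q ≤ 0.1) : -log (1 - q) ≤ 1 / 2 := by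
  have hlog := one_sub_inv_le_log_of_pos (by linarith : 0 < 1 - q)
  have hinv : (1 - q)⁻¹ ≤ 10 / 9 := by rw [inv_le_comm₀ (by linarith) (by norm_num)]; linarith
  linarith

lemma mul_two_pow_eq_rpow {a : ℝ} (ha : 0 < a) (n : ℕ) :
    a * 2 ^ n = (2 : ℝ) ^ ((n : ℝ) - -logb 2 a) := by
  rw [sub_neg_eq_add, rpow_add two_pos, rpow_natCast, rpow_logb two_pos (by norm_num) ha,
    mul_comm]

lemma mul_two_pow_le_one {a : ℝ} (ha : 0 < a) {n : ℕ} (h : (n : ℝ) ≤ -logb 2 a) :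
    a * 2 ^ n ≤ 1 := by
  rw [mul_two_pow_eq_rpow ha]
  exact rpow_le_one_of_one_le_of_nonpos one_le_two (by linarith)

lemma eight_le_mul_two_pow {a : ℝ} (ha : 0 < a) {n : ℕ} (h : -logb 2 a + 3 ≤ n) :
    8 ≤ a * 2 ^ n := by
  rw [mul_two_pow_eq_rpow ha, show (8 : ℝ) = 2 ^ (3 : ℝ) by norm_num]
  exact rpow_le_rpow_of_exponent_le one_le_two (by linarith)

/-- For `q ∈ [10⁻¹⁵, 0.1]` and `y = -log₂(-ln(1-q))`, any positive integer
`k_opt` minimizing `k ↦ qk/(1-(1-q)^{2^k-1})` over the positive integers lies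
in `{⌊y⌋, ⌊y⌋+1, ⌊y⌋+2, ⌊y⌋+3, ⌈y⌉+3}`. -/
theorem stmt_18 (q : ℝ) (hq : q ∈ Set.Icc (1e-15 : ℝ) 0.1)
    (kopt : ℕ) (hkpos : 1 ≤ kopt)
    (hkopt : ∀ k : ℕ, 1 ≤ k →
      q * (kopt : ℝ) / (1 - (1 - q) ^ (2 ^ kopt - 1)) ≤
        q * (k : ℝ) / (1 - (1 - q) ^ (2 ^ k - 1))) :
    (kopt : ℤ) = ⌊-Real.logb 2 (-Real.log (1 - q))⌋ ∨
    (kopt : ℤ) = ⌊-Real.logb 2 (-Real.log (1 - q))⌋ + 1 ∨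
    (kopt : ℤ) = ⌊-Real.logb 2 (-Real.log (1 - q))⌋ + 2 ∨
    (kopt : ℤ) = ⌊-Real.logb 2 (-Real.log (1 - q))⌋ + 3 ∨
    (kopt : ℤ) = ⌈-Real.logb 2 (-Real.log (1 - q))⌉ + 3 := by
  obtain ⟨hq_lo, hq_hi⟩ := hq
  have hq0 : 0 < q := by linarith
  have hq1 : q < 1 := by linarith
  have ha_lo := le_neg_log_one_sub hq1
  have ha_hi := neg_log_one_sub_le_half hq_hi
  set a := -log (1 - q)
  have ha : 0 < a := by linarith
  set y := -logb 2 a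
  have hlow : ⌊y⌋ ≤ kopt := by
    by_contra! h
    have hy : ((kopt + 1 : ℕ) : ℝ) ≤ y := by
      push_cast; exact_mod_cast Int.le_floor.1 (by omega : (kopt : ℤ) + 1 ≤ ⌊y⌋)
    exact (mzrlLength_succ_lt hq0 hq1 hkpos (mul_two_pow_le_one ha hy)).not_ge
      (hkopt _ (by omega))
  have hhigh : (kopt : ℤ) ≤ ⌈y⌉ + 3 := by
    by_contra! h
    have hy : 0 ≤ y := neg_nonneg.2 (logb_nonpos one_lt_two ha.le (by linarith))
    obtain ⟨j, rfl⟩ : ∃ j, kopt = j + 1 := ⟨kopt - 1, by omega⟩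
    have hj : 1 ≤ j := by have := Int.ceil_nonneg hy; omega
    have hjy : y + 3 ≤ j := by
      have := Int.le_ceil y
      have : (⌈y⌉ : ℝ) + 3 ≤ j := by exact_mod_cast (by omega : ⌈y⌉ + 3 ≤ (j : ℤ))
      linarith
    exact (mzrlLength_lt_succ hq0 hq1 hj (eight_le_mul_two_pow ha hjy) (by linarith)
      ha_hi).not_ge (hkopt j hj)
  have := Int.ceil_le_floor_add_one y
  omega
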